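/- For n ≥ 1 and A > B ≥ 0, the image under φ(z) = A(z + zⁿ/n) + B(z̄ + z̄ⁿ/n) of the closed unit disc is contained in the closed region bounded by the ellipse with semi-axes (A+B)(n+1)/n and (A−B)(n+1)/n, i.e., for |z| ≤ 1, writing φ(z) = x + iy, we have x²/((A+B)(n+1)/n)² + y²/((A−B)(n+1)/n)² ≤ 1. -/

import Mathlib

open Complex

/-- For `n ≥ 1` and `A > B ≥ 0`, the image of the closed unit disc under
`φ(z) = A(z + zⁿ/n) + B(z̄ + z̄ⁿ/n)` lies inside the closed region bounded by the
ellipse with semi-axes `(A+B)(n+1)/n` and `(A−B)(n+1)/n`. -/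
theorem stmt_17 (n : ℕ) (hn : 1 ≤ n) (A B : ℝ) (hAB : B < A) (hB : 0 ≤ B)
    (φ : ℂ → ℂ)
    (hφ : ∀ z : ℂ, φ z =
      (A : ℂ) * (z + z ^ n / (n : ℂ))
        + (B : ℂ) * (starRingEnd ℂ z + (starRingEnd ℂ z) ^ n / (n : ℂ))) :
    ∀ z : ℂ, ‖z‖ ≤ 1 →
      (φ z).re ^ 2 / ((A + B) * ((n : ℝ) + 1) / n) ^ 2
        + (φ z).im ^ 2 / ((A - B) * ((n : ℝ) + 1) / n) ^ 2 ≤ 1 := by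
  intro z hz
  have hn0 : (0:ℝ) < n := by exact_mod_cast hn
  set w : ℂ := z + z ^ n / (n : ℂ) with hw
  have hconj : starRingEnd ℂ z + (starRingEnd ℂ z) ^ n / (n : ℂ) = starRingEnd ℂ w := by
    simp [hw, map_add, map_div₀, map_pow, Complex.conj_natCast]
  have hφz : φ z = (A : ℂ) * w + (B : ℂ) * starRingEnd ℂ w := by
    rw [hφ z, hconj]
  have hre : (φ z).re = (A + B) * w.re := by
    rw [hφz]; simp; ring
  have him : (φ z).im = (A - B) * w.im := by
    rw [hφz]; simp; ring
  have hwbound : ‖w‖ ≤ ((n:ℝ) + 1) / n := by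
    calc ‖w‖ ≤ ‖z‖ + ‖z ^ n / (n:ℂ)‖ := norm_add_le _ _
      _ ≤ 1 + 1 / n := by
          gcongr
          rw [norm_div, norm_pow]
          simp only [Complex.norm_natCast]
          gcongr
          exact pow_le_one₀ (norm_nonneg z) hz
      _ = ((n:ℝ) + 1) / n := by field_simp
  set c : ℝ := ((n:ℝ) + 1) / n with hc
  have hc0 : 0 < c := by positivity
  have hAB0 : 0 < A + B := by linarith
  have hAmB : 0 < A - B := by linarith
  have h1 : (φ z).re ^ 2 / ((A + B) * c) ^ 2 = w.re ^ 2 / c ^ 2 := by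
    rw [hre]; field_simp
  have h2 : (φ z).im ^ 2 / ((A - B) * c) ^ 2 = w.im ^ 2 / c ^ 2 := by
    rw [him]; field_simp
  rw [mul_div_assoc, mul_div_assoc, h1, h2, ← add_div, div_le_one (by positivity)]
  have : w.re ^ 2 + w.im ^ 2 = ‖w‖ ^ 2 := by
    rw [Complex.sq_norm, Complex.normSq_apply]; ring
  rw [this]
  exact pow_le_pow_left₀ (norm_nonneg w) hwbound 2
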